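/- Let U : B₁ ⊗ Q₁ → F ⊗ Q₂ be a unitary and define Λ : L(Q₁) → L(Q₂) by Λ(ρ) = Tr_F[U(ρ ⊗ ω_{B₁})U†], where ω_{B₁} = I/dim(B₁). Then for every density matrix η on Q₁, H(Λ(η)) − H(η) ≥ log₂(dim(Q₂)/dim(Q₁)) = log₂(dim(B₁)/dim(F)). -/

import Mathlib

open Matrix
open scoped ComplexOrder

/-- Matrix base-2 logarithm of a Hermitian matrix, via spectral decomposition
(junk value `0` on non-Hermitian input). -/
noncomputable def mlog2 {n : Type*} [Fintype n] [DecidableEq n]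
    (A : Matrix n n ℂ) : Matrix n n ℂ :=
  if hA : A.IsHermitian then
    (hA.eigenvectorUnitary : Matrix n n ℂ) *
      Matrix.diagonal (fun i => (Real.logb 2 (hA.eigenvalues i) : ℂ)) *
      star (hA.eigenvectorUnitary : Matrix n n ℂ)
  else 0

/-- Von Neumann entropy (base 2): `H(ρ) = -Tr[ρ log₂ ρ]`. -/
noncomputable def vnEntropy {n : Type*} [Fintype n] [DecidableEq n]
    (ρ : Matrix n n ℂ) : ℝ :=
  -(ρ * mlog2 ρ).trace.re
open Kronecker
/-- The channel `Λ(ρ) = Tr_F[U (ω_{B₁} ⊗ ρ) U†]`, where `ω_{B₁}` is the maximally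
mixed state on `B₁` and `U : B₁ ⊗ Q₁ → F ⊗ Q₂` (a completely factorizable channel). -/
noncomputable def factorizableChannel (b q1 f q2 : ℕ)
    (U : Matrix (Fin f × Fin q2) (Fin b × Fin q1) ℂ)
    (ρ : Matrix (Fin q1) (Fin q1) ℂ) : Matrix (Fin q2) (Fin q2) ℂ :=
  Matrix.of fun p q : Fin q2 =>
    ∑ x : Fin f,
      (U * (((b : ℂ)⁻¹ • (1 : Matrix (Fin b) (Fin b) ℂ)) ⊗ₖ ρ) * Uᴴ) (x, p) (x, q)

/-!
Put `σ = U (ω ⊗ η) U†`, a state on `F ⊗ Q₂` whose partial trace over `F` is `Λ(η)`. Unitary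
invariance and additivity of the entropy give `H(σ) = log₂ b + H(η)`. Klein's inequality for
`σ` against `ω_F ⊗ Λ(η)` bounds the conditional entropy: `H(σ) ≤ log₂ f + H(Λ(η))`. Hence
`H(Λ(η)) - H(η) ≥ log₂ (b / f)`, and `b * q1 = f * q2` because `U` is unitary.
-/

open Finset Real

lemma Real.mul_logb_le_mul_logb_add {x y : ℝ} (hx : 0 ≤ x) (hy : 0 ≤ y) (hxy : y = 0 → x = 0) :
    x * logb 2 y ≤ x * logb 2 x + (y - x) / log 2 := by
  have hlog2 : 0 < log 2 := log_pos one_lt_two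
  rcases hx.eq_or_lt with rfl | hx
  · simpa using div_nonneg hy hlog2.le
  have hy : 0 < y := hy.lt_of_ne' fun h => hx.ne' (hxy h)
  have key : x * (log y - log x) ≤ y - x := by
    rw [← log_div hy.ne' hx.ne']
    calc x * log (y / x) ≤ x * (y / x - 1) :=
          mul_le_mul_of_nonneg_left (log_le_sub_one_of_pos (by positivity)) hx.le
      _ = y - x := by field_simp
  calc x * logb 2 y = x * logb 2 x + x * (log y - log x) / log 2 := by simp only [logb]; ring
    _ ≤ x * logb 2 x + (y - x) / log 2 := by gcongr

lemma sum_vecMul_mul_logb_le_of_mem_doublyStochastic {ι : Type*} [Fintype ι] [DecidableEq ι]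
    {c : Matrix ι ι ℝ} (hc : c ∈ doublyStochastic ℝ ι) {p q : ι → ℝ} (hp : 0 ≤ p) (hq : 0 ≤ q)
    (hsum : ∑ j, q j ≤ ∑ i, p i) (hsupp : ∀ j, q j = 0 → (p ᵥ* c) j = 0) :
    ∑ j, (p ᵥ* c) j * logb 2 (q j) ≤ ∑ i, p i * logb 2 (p i) := by
  have hc0 : ∀ i j, 0 ≤ c i j := fun i j => nonneg_of_mem_doublyStochastic hc
  have hterm : ∀ i j, c i j * (p i * logb 2 (q j)) ≤
      c i j * (p i * logb 2 (p i) + (q j - p i) / log 2) := by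
    intro i j
    rcases (hc0 i j).eq_or_lt with h | h
    · simp [← h]
    refine mul_le_mul_of_nonneg_left (mul_logb_le_mul_logb_add (hp i) (hq j) fun hqj => ?_) h.le
    have hzero := (sum_eq_zero_iff_of_nonneg fun i _ => mul_nonneg (hp i) (hc0 i j)).1
      (hsupp j hqj) i (mem_univ i)
    exact (mul_eq_zero.1 hzero).resolve_right h.ne'
  calc ∑ j, (p ᵥ* c) j * logb 2 (q j) = ∑ i, ∑ j, c i j * (p i * logb 2 (q j)) := by
        simp only [vecMul, dotProduct, sum_mul]
        rw [sum_comm]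
        exact sum_congr rfl fun i _ => sum_congr rfl fun j _ => by ring
    _ ≤ ∑ i, ∑ j, c i j * (p i * logb 2 (p i) + (q j - p i) / log 2) :=
        sum_le_sum fun i _ => sum_le_sum fun j _ => hterm i j
    _ = ∑ i, p i * logb 2 (p i) + (∑ j, q j - ∑ i, p i) / log 2 := by
        simp only [mul_add, sum_add_distrib, ← sum_mul, sum_row_of_mem_doublyStochastic hc,
          one_mul]
        congr 1
        simp only [mul_div_assoc', ← sum_div, mul_sub, sum_sub_distrib]
        rw [sum_comm (f := fun i j => c i j * q j)]
        simp only [← sum_mul, sum_col_of_mem_doublyStochastic hc,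
          sum_row_of_mem_doublyStochastic hc, one_mul]
    _ ≤ ∑ i, p i * logb 2 (p i) := by
        have : (∑ j, q j - ∑ i, p i) / log 2 ≤ 0 :=
          div_nonpos_of_nonpos_of_nonneg (by linarith) (log_pos one_lt_two).le
        linarith

namespace Matrix

lemma isHermitian_diagonal_ofReal {n : Type*} [DecidableEq n] (d : n → ℝ) :
    (diagonal fun i => (d i : ℂ)).IsHermitian :=
  isHermitian_diagonal_iff.2 fun i => by simp [IsSelfAdjoint]

lemma trace_mul_mul_conjTranspose_of_isometry {n m : Type*} [Fintype n] [Fintype m]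
    [DecidableEq m] {W : Matrix n m ℂ} (hW : Wᴴ * W = 1) (M : Matrix m m ℂ) :
    (W * M * Wᴴ).trace = M.trace := by
  rw [trace_mul_comm, ← Matrix.mul_assoc, hW, Matrix.one_mul]

variable {n m : Type*} [Fintype n] [DecidableEq n] [Fintype m] [DecidableEq m]

lemma map_normSq_mem_doublyStochastic {V : Matrix n n ℂ} (hV : V ∈ unitaryGroup n ℂ) :
    V.map Complex.normSq ∈ doublyStochastic ℝ n := by
  have hrow := mem_unitaryGroup_iff.1 hV
  have hcol := mem_unitaryGroup_iff'.1 hV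
  refine mem_doublyStochastic_iff_sum.2
    ⟨fun _ _ => Complex.normSq_nonneg _, fun i => ?_, fun j => ?_⟩
  · have h := congrFun (congrFun hrow i) i
    simp only [mul_apply, star_apply, RCLike.star_def, Complex.mul_conj, one_apply_eq] at h
    exact_mod_cast h
  · have h := congrFun (congrFun hcol j) j
    simp only [mul_apply, star_apply, RCLike.star_def, mul_comm, Complex.mul_conj,
      one_apply_eq] at h
    exact_mod_cast h

lemma card_eq_of_unitary {W : Matrix n m ℂ} (hW : Wᴴ * W = 1) (hW' : W * Wᴴ = 1) :
    Fintype.card n = Fintype.card m := by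
  have h := trace_mul_comm W Wᴴ
  rw [hW, hW', trace_one, trace_one] at h
  exact_mod_cast h

namespace IsHermitian

lemma eq_eigenvectorUnitary_mul_diagonal_mul {A : Matrix n n ℂ} (hA : A.IsHermitian) :
    A = hA.eigenvectorUnitary * diagonal (fun i => (hA.eigenvalues i : ℂ)) *
      (hA.eigenvectorUnitary : Matrix n n ℂ)ᴴ := by
  conv_lhs => rw [hA.spectral_theorem, Unitary.conjStarAlgAut_apply]
  rfl

lemma sum_eigenvalues_eq_one {A : Matrix n n ℂ} (hA : A.IsHermitian) (hA1 : A.trace = 1) :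
    ∑ i, hA.eigenvalues i = 1 := by
  have h := hA.trace_eq_sum_eigenvalues
  rw [hA1] at h
  exact_mod_cast (Complex.ofReal_sum _ _).trans h.symm

lemma vnEntropy_eq_neg_sum_eigenvalues {A : Matrix n n ℂ} (hA : A.IsHermitian) :
    vnEntropy A = -∑ i, hA.eigenvalues i * logb 2 (hA.eigenvalues i) := by
  set V : Matrix n n ℂ := ↑hA.eigenvectorUnitary
  have hV : Vᴴ * V = 1 := mem_unitaryGroup_iff'.1 hA.eigenvectorUnitary.2
  have hprod : A * mlog2 A =
      V * diagonal (fun i => ((hA.eigenvalues i * logb 2 (hA.eigenvalues i) : ℝ) : ℂ)) * Vᴴ := by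
    rw [mlog2, dif_pos hA, star_eq_conjTranspose]
    nth_rewrite 1 [hA.eq_eigenvectorUnitary_mul_diagonal_mul]
    calc _ = V * (diagonal (fun i => (hA.eigenvalues i : ℂ)) * (Vᴴ * V) *
          diagonal (fun i => (logb 2 (hA.eigenvalues i) : ℂ))) * Vᴴ := by
          simp only [Matrix.mul_assoc]; rfl
      _ = _ := by rw [hV, Matrix.mul_one, diagonal_mul_diagonal]; push_cast; rfl
  rw [vnEntropy, hprod, trace_mul_mul_conjTranspose_of_isometry hV, trace_diagonal,
    ← Complex.ofReal_sum, Complex.ofReal_re]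

lemma eigenvalues_map_eq_of_unitary_conj {W : Matrix n m ℂ} (hW : Wᴴ * W = 1)
    (hW' : W * Wᴴ = 1) {d : m → ℝ} (hA : (W * diagonal (fun i => (d i : ℂ)) * Wᴴ).IsHermitian) :
    univ.val.map hA.eigenvalues = univ.val.map d := by
  have hchar : (W * diagonal (fun i => (d i : ℂ)) * Wᴴ).charpoly =
      (diagonal (fun i => (d i : ℂ))).charpoly := by
    rw [charpoly_mul_comm_of_le _ _ (card_eq_of_unitary hW hW').ge, ← Matrix.mul_assoc, hW,
      Matrix.one_mul, card_eq_of_unitary hW hW', Nat.sub_self, pow_zero, one_mul]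
  have hroots := hA.roots_charpoly_eq_eigenvalues
  rw [hchar, charpoly_diagonal, Polynomial.roots_prod _ _ (by
    simp [Finset.prod_ne_zero_iff, Polynomial.X_sub_C_ne_zero])] at hroots
  simp only [Polynomial.roots_X_sub_C, Multiset.bind_singleton] at hroots
  have hd : univ.val.map (fun i => (d i : ℂ)) = (univ.val.map d).map RCLike.ofReal := by
    rw [Multiset.map_map]; rfl
  exact Multiset.map_injective RCLike.ofReal_injective
    ((Multiset.map_map _ _ _).trans (hroots.symm.trans hd))

end IsHermitian

lemma vnEntropy_unitary_conj_diagonal {W : Matrix n m ℂ} (hW : Wᴴ * W = 1) (hW' : W * Wᴴ = 1)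
    (d : m → ℝ) :
    vnEntropy (W * diagonal (fun i => (d i : ℂ)) * Wᴴ) = -∑ i, d i * logb 2 (d i) := by
  have hA := isHermitian_mul_mul_conjTranspose W (isHermitian_diagonal_ofReal d)
  have h := congrArg (fun s => (s.map fun x => x * logb 2 x).sum)
    (hA.eigenvalues_map_eq_of_unitary_conj hW hW')
  simp only [Multiset.map_map, Function.comp_def, sum_map_val] at h
  rw [hA.vnEntropy_eq_neg_sum_eigenvalues, h]

lemma vnEntropy_diagonal (d : n → ℝ) :
    vnEntropy (diagonal fun i => (d i : ℂ)) = -∑ i, d i * logb 2 (d i) := by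
  simpa using vnEntropy_unitary_conj_diagonal (W := (1 : Matrix n n ℂ)) (by simp) (by simp) d

lemma vnEntropy_unitary_conj {W : Matrix n m ℂ} (hW : Wᴴ * W = 1) (hW' : W * Wᴴ = 1)
    {A : Matrix m m ℂ} (hA : A.IsHermitian) : vnEntropy (W * A * Wᴴ) = vnEntropy A := by
  set V : Matrix m m ℂ := ↑hA.eigenvectorUnitary
  have hV : Vᴴ * V = 1 := mem_unitaryGroup_iff'.1 hA.eigenvectorUnitary.2
  have hV' : V * Vᴴ = 1 := mem_unitaryGroup_iff.1 hA.eigenvectorUnitary.2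
  have hconj : W * A * Wᴴ =
      (W * V) * diagonal (fun i => (hA.eigenvalues i : ℂ)) * (W * V)ᴴ := by
    conv_lhs => rw [hA.eq_eigenvectorUnitary_mul_diagonal_mul]
    simp only [conjTranspose_mul, Matrix.mul_assoc]
    rfl
  have hWV : (W * V)ᴴ * (W * V) = 1 := by
    rw [conjTranspose_mul, Matrix.mul_assoc, ← Matrix.mul_assoc Wᴴ, hW, Matrix.one_mul, hV]
  have hWV' : (W * V) * (W * V)ᴴ = 1 := by
    rw [conjTranspose_mul, Matrix.mul_assoc, ← Matrix.mul_assoc V, hV', Matrix.one_mul, hW']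
  rw [hconj, vnEntropy_unitary_conj_diagonal hWV hWV', hA.vnEntropy_eq_neg_sum_eigenvalues]

lemma vnEntropy_kronecker {A : Matrix n n ℂ} {B : Matrix m m ℂ} (hA : A.IsHermitian)
    (hB : B.IsHermitian) (hA1 : A.trace = 1) (hB1 : B.trace = 1) :
    vnEntropy (A ⊗ₖ B) = vnEntropy A + vnEntropy B := by
  set X : Matrix n n ℂ := ↑hA.eigenvectorUnitary
  set Y : Matrix m m ℂ := ↑hB.eigenvectorUnitary
  set a := hA.eigenvalues
  set c := hB.eigenvalues
  have hAB : A ⊗ₖ B =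
      (X ⊗ₖ Y) * diagonal (fun ij => ((a ij.1 * c ij.2 : ℝ) : ℂ)) * (X ⊗ₖ Y)ᴴ := by
    conv_lhs => rw [hA.eq_eigenvectorUnitary_mul_diagonal_mul,
      hB.eq_eigenvectorUnitary_mul_diagonal_mul]
    rw [conjTranspose_kronecker, mul_kronecker_mul, mul_kronecker_mul,
      diagonal_kronecker_diagonal]
    push_cast
    rfl
  have hterm : ∀ i j, a i * c j * logb 2 (a i * c j) =
      c j * (a i * logb 2 (a i)) + a i * (c j * logb 2 (c j)) := by
    intro i j
    rcases eq_or_ne (a i) 0 with hi | hi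
    · simp [hi]
    rcases eq_or_ne (c j) 0 with hj | hj
    · simp [hj]
    rw [logb_mul hi hj]
    ring
  have hXY : X ⊗ₖ Y ∈ unitaryGroup (n × m) ℂ :=
    kronecker_mem_unitary hA.eigenvectorUnitary.2 hB.eigenvectorUnitary.2
  rw [hAB, vnEntropy_unitary_conj_diagonal (mem_unitaryGroup_iff'.1 hXY)
    (mem_unitaryGroup_iff.1 hXY), hA.vnEntropy_eq_neg_sum_eigenvalues,
    hB.vnEntropy_eq_neg_sum_eigenvalues, Fintype.sum_prod_type]
  have ha1 : ∑ i, a i = 1 := hA.sum_eigenvalues_eq_one hA1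
  have hc1 : ∑ j, c j = 1 := hB.sum_eigenvalues_eq_one hB1
  simp only [hterm, sum_add_distrib, ← mul_sum, ← sum_mul, ha1, hc1]
  ring

lemma vnEntropy_maximallyMixed [Nonempty n] :
    vnEntropy ((Fintype.card n : ℂ)⁻¹ • (1 : Matrix n n ℂ)) = logb 2 (Fintype.card n) := by
  have hω : (Fintype.card n : ℂ)⁻¹ • (1 : Matrix n n ℂ) =
      diagonal fun _ => (((Fintype.card n : ℝ)⁻¹ : ℝ) : ℂ) := by
    rw [smul_one_eq_diagonal]; push_cast; rfl
  have hN : (Fintype.card n : ℝ) ≠ 0 := Nat.cast_ne_zero.2 Fintype.card_ne_zero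
  rw [hω, vnEntropy_diagonal, sum_const, card_univ, nsmul_eq_mul, logb_inv, ← mul_assoc,
    mul_inv_cancel₀ hN]
  ring

lemma trace_maximallyMixed [Nonempty n] :
    ((Fintype.card n : ℂ)⁻¹ • (1 : Matrix n n ℂ)).trace = 1 := by
  rw [trace_smul, trace_one, smul_eq_mul,
    inv_mul_cancel₀ (Nat.cast_ne_zero.2 Fintype.card_ne_zero)]

/-- Klein's inequality `Tr[τ log₂ (diagonal q)] ≤ -H(τ)`. In the eigenbasis `V` of `τ`, the
diagonal of `τ` is its spectrum mixed by the doubly stochastic matrix `|Vᵢⱼ|²`. -/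
lemma PosSemidef.sum_re_diag_mul_logb_le {τ : Matrix n n ℂ} (hτ : τ.PosSemidef) {q : n → ℝ}
    (hq : 0 ≤ q) (hsum : ∑ j, q j ≤ ∑ j, (τ j j).re) (hsupp : ∀ j, q j = 0 → τ j j = 0) :
    ∑ j, (τ j j).re * logb 2 (q j) ≤ -vnEntropy τ := by
  set V : Matrix n n ℂ := ↑hτ.1.eigenvectorUnitary
  set p := hτ.1.eigenvalues
  set c := (V.map Complex.normSq)ᵀ
  have hc : c ∈ doublyStochastic ℝ n := transpose_mem_doublyStochastic_iff.2
    (map_normSq_mem_doublyStochastic hτ.1.eigenvectorUnitary.2)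
  have hdiag : ∀ j, τ j j = ((p ᵥ* c) j : ℂ) := by
    intro j
    conv_lhs => rw [hτ.1.eq_eigenvectorUnitary_mul_diagonal_mul]
    simp only [mul_apply, diagonal_apply, mul_ite, mul_zero, sum_ite_eq',
      mem_univ, if_true, conjTranspose_apply, vecMul, dotProduct, c, transpose_apply, map_apply,
      Complex.ofReal_sum, Complex.ofReal_mul, Complex.normSq_eq_conj_mul_self]
    exact sum_congr rfl fun i _ => by simp only [RCLike.star_def]; ring
  have hre : ∀ j, (τ j j).re = (p ᵥ* c) j := fun j => by rw [hdiag j, Complex.ofReal_re]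
  have htrace : ∑ j, (τ j j).re = ∑ i, p i := by
    simpa [trace, Complex.re_sum] using congrArg Complex.re hτ.1.trace_eq_sum_eigenvalues
  rw [hτ.1.vnEntropy_eq_neg_sum_eigenvalues, neg_neg]
  simp only [hre] at htrace hsum ⊢
  exact sum_vecMul_mul_logb_le_of_mem_doublyStochastic hc (fun i => hτ.eigenvalues_nonneg i) hq
    (hsum.trans_eq htrace) fun j hj => by exact_mod_cast (hdiag j).symm.trans (hsupp j hj)

end Matrix

section PartialTrace

variable {α β R : Type*} [Fintype α]

def partialTraceLeft [AddCommMonoid R] (σ : Matrix (α × β) (α × β) R) : Matrix β β R :=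
  of fun p q => ∑ x, σ (x, p) (x, q)

lemma partialTraceLeft_eq_sum_submatrix [AddCommMonoid R] (σ : Matrix (α × β) (α × β) R) :
    partialTraceLeft σ = ∑ x, σ.submatrix (Prod.mk x) (Prod.mk x) := by
  ext p q
  simp [partialTraceLeft, Matrix.sum_apply]

lemma trace_partialTraceLeft [Fintype β] [AddCommMonoid R] (σ : Matrix (α × β) (α × β) R) :
    (partialTraceLeft σ).trace = σ.trace := by
  simp only [trace, Matrix.diag, partialTraceLeft, of_apply, Fintype.sum_prod_type]
  exact sum_comm

lemma Matrix.PosSemidef.partialTraceLeft [Fintype β] {σ : Matrix (α × β) (α × β) ℂ}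
    (hσ : σ.PosSemidef) : (partialTraceLeft σ).PosSemidef := by
  rw [partialTraceLeft_eq_sum_submatrix]
  exact posSemidef_sum _ fun x _ => hσ.submatrix _

lemma partialTraceLeft_one_kronecker_mul_mul_one_kronecker [Fintype β] [DecidableEq α]
    [CommSemiring R] (σ : Matrix (α × β) (α × β) R) (A B : Matrix β β R) :
    partialTraceLeft ((1 ⊗ₖ A) * σ * (1 ⊗ₖ B)) = A * partialTraceLeft σ * B := by
  ext p q
  simp only [partialTraceLeft, of_apply, mul_apply, kroneckerMap_apply, Fintype.sum_prod_type,
    one_apply, ite_mul, mul_ite, zero_mul, mul_zero, one_mul, sum_ite_irrel, sum_const_zero,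
    sum_ite_eq, sum_ite_eq', mem_univ, if_true, sum_mul, mul_sum]
  exact sum_comm.trans (sum_congr rfl fun _ _ => sum_comm)

end PartialTrace

/-- Klein's inequality against the product state `ω_α ⊗ diag c`. -/
lemma vnEntropy_le_of_partialTraceLeft_eq_diagonal {α β : Type*} [Fintype α]
    [DecidableEq α] [Nonempty α] [Fintype β] [DecidableEq β] {τ : Matrix (α × β) (α × β) ℂ}
    (hτ : τ.PosSemidef) {c : β → ℝ} (hτc : partialTraceLeft τ = diagonal fun l => (c l : ℂ))
    (hc1 : ∑ l, c l = 1) :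
    vnEntropy τ ≤ logb 2 (Fintype.card α) - ∑ l, c l * logb 2 (c l) := by
  have hN : (0 : ℝ) < Fintype.card α := Nat.cast_pos.2 Fintype.card_pos
  have hmarg : ∀ l, ∑ k, τ (k, l) (k, l) = c l := fun l => by
    simpa [partialTraceLeft] using congrFun (congrFun hτc l) l
  have hmarg_re : ∀ l, ∑ k, (τ (k, l) (k, l)).re = c l := fun l => by
    rw [← Complex.re_sum, hmarg l, Complex.ofReal_re]
  have hc0 : ∀ l, 0 ≤ c l := fun l =>
    hmarg_re l ▸ sum_nonneg fun k _ => (Complex.nonneg_iff.1 hτ.diag_nonneg).1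
  set q : α × β → ℝ := fun kl => c kl.2 / Fintype.card α
  have hq : 0 ≤ q := fun kl => div_nonneg (hc0 kl.2) hN.le
  have hsum : ∑ j, q j = ∑ j, (τ j j).re := by
    rw [Fintype.sum_prod_type, Fintype.sum_prod_type, sum_comm,
      sum_comm (f := fun k l => (τ (k, l) (k, l)).re)]
    refine sum_congr rfl fun l _ => ?_
    rw [hmarg_re l]
    simp only [q, sum_const, card_univ, nsmul_eq_mul]
    field_simp
  have hsupp : ∀ j, q j = 0 → τ j j = 0 := by
    rintro ⟨k, l⟩ hql
    have h := hmarg l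
    rw [show c l = 0 by simpa [q, hN.ne'] using hql, Complex.ofReal_zero] at h
    exact (sum_eq_zero_iff_of_nonneg fun k _ => hτ.diag_nonneg).1 h k (mem_univ k)
  have hlogb : ∀ l, c l * logb 2 (c l / Fintype.card α) =
      c l * logb 2 (c l) - c l * logb 2 (Fintype.card α) := by
    intro l
    rcases eq_or_ne (c l) 0 with h | h
    · simp [h]
    rw [logb_div h hN.ne', mul_sub]
  have hcross : ∑ j, (τ j j).re * logb 2 (q j) =
      ∑ l, c l * logb 2 (c l) - logb 2 (Fintype.card α) := by
    rw [Fintype.sum_prod_type, sum_comm]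
    simp only [q, ← sum_mul, hmarg_re, hlogb, sum_sub_distrib, hc1, one_mul]
  linarith [hτ.sum_re_diag_mul_logb_le hq hsum.le hsupp]

lemma vnEntropy_le_logb_card_add_vnEntropy_partialTraceLeft {α β : Type*} [Fintype α]
    [DecidableEq α] [Nonempty α] [Fintype β] [DecidableEq β] {σ : Matrix (α × β) (α × β) ℂ}
    (hσ : σ.PosSemidef) (hσ1 : σ.trace = 1) :
    vnEntropy σ ≤ logb 2 (Fintype.card α) + vnEntropy (partialTraceLeft σ) := by
  set B := partialTraceLeft σ
  have hB : B.IsHermitian := hσ.partialTraceLeft.1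
  set Y : Matrix β β ℂ := ↑hB.eigenvectorUnitary
  have hW : (1 ⊗ₖ Y : Matrix (α × β) (α × β) ℂ) ∈ unitaryGroup (α × β) ℂ :=
    kronecker_mem_unitary (one_mem _) hB.eigenvectorUnitary.2
  have hkron : (1 ⊗ₖ Y : Matrix (α × β) (α × β) ℂ)ᴴ = 1 ⊗ₖ Yᴴ := by
    rw [conjTranspose_kronecker, conjTranspose_one]
  set τ := (1 ⊗ₖ Yᴴ) * σ * (1 ⊗ₖ Y)
  have hτ : τ.PosSemidef := by
    have h := hσ.conjTranspose_mul_mul_same ((1 : Matrix α α ℂ) ⊗ₖ Y)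
    rwa [hkron] at h
  have hτσ : vnEntropy τ = vnEntropy σ := by
    have h := vnEntropy_unitary_conj (W := (1 ⊗ₖ Y)ᴴ)
      (by rw [conjTranspose_conjTranspose]; exact mem_unitaryGroup_iff.1 hW)
      (by rw [conjTranspose_conjTranspose]; exact mem_unitaryGroup_iff'.1 hW) hσ.1
    rwa [conjTranspose_conjTranspose, hkron] at h
  have hτc : partialTraceLeft τ = diagonal fun l => (hB.eigenvalues l : ℂ) := by
    have h := hB.conjStarAlgAut_star_eigenvectorUnitary
    rw [Unitary.conjStarAlgAut_apply, Unitary.coe_star, star_star] at h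
    rw [partialTraceLeft_one_kronecker_mul_mul_one_kronecker]
    exact h
  have hbound := vnEntropy_le_of_partialTraceLeft_eq_diagonal hτ hτc
    (hB.sum_eigenvalues_eq_one ((trace_partialTraceLeft σ).trans hσ1))
  rw [hB.vnEntropy_eq_neg_sum_eigenvalues, ← hτσ]
  linarith

theorem factorizableChannel_entropy_gain_general (b q1 f q2 : ℕ)
    (hb : 0 < b) (hq1 : 0 < q1) (hf : 0 < f)
    (U : Matrix (Fin f × Fin q2) (Fin b × Fin q1) ℂ)
    (hU1 : U * Uᴴ = 1) (hU2 : Uᴴ * U = 1)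
    (η : Matrix (Fin q1) (Fin q1) ℂ) (hη : η.PosSemidef) (hη1 : η.trace = 1) :
    vnEntropy (factorizableChannel b q1 f q2 U η) - vnEntropy η ≥
        Real.logb 2 ((q2 : ℝ) / (q1 : ℝ)) ∧
      Real.logb 2 ((q2 : ℝ) / (q1 : ℝ)) = Real.logb 2 ((b : ℝ) / (f : ℝ)) := by
  have : Nonempty (Fin b) := ⟨⟨0, hb⟩⟩
  have : Nonempty (Fin f) := ⟨⟨0, hf⟩⟩
  have hdim : (f : ℝ) * q2 = b * q1 := by
    exact_mod_cast (by simpa using card_eq_of_unitary hU2 hU1 : f * q2 = b * q1)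
  have hratio : logb 2 ((q2 : ℝ) / q1) = logb 2 ((b : ℝ) / f) := by
    congr 1
    rw [div_eq_div_iff (by positivity) (by positivity), mul_comm, hdim]
  refine ⟨?_, hratio⟩
  set ω : Matrix (Fin b) (Fin b) ℂ := (b : ℂ)⁻¹ • 1
  have hω : ω = (Fintype.card (Fin b) : ℂ)⁻¹ • 1 := by rw [Fintype.card_fin]
  have hω_psd : ω.PosSemidef := PosSemidef.one.smul (by positivity)
  have hωη : (ω ⊗ₖ η).PosSemidef := hω_psd.kronecker hη
  have hσ := hωη.mul_mul_conjTranspose_same U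
  have hσ1 : (U * (ω ⊗ₖ η) * Uᴴ).trace = 1 := by
    rw [trace_mul_mul_conjTranspose_of_isometry hU2, trace_kronecker, hω, trace_maximallyMixed,
      hη1, one_mul]
  have hσent : vnEntropy (U * (ω ⊗ₖ η) * Uᴴ) = logb 2 b + vnEntropy η := by
    rw [vnEntropy_unitary_conj hU2 hU1 hωη.1,
      vnEntropy_kronecker hω_psd.1 hη.1 (hω ▸ trace_maximallyMixed) hη1, hω,
      vnEntropy_maximallyMixed, Fintype.card_fin]
  have hbound := vnEntropy_le_logb_card_add_vnEntropy_partialTraceLeft hσ hσ1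
  rw [Fintype.card_fin] at hbound
  change vnEntropy (partialTraceLeft (U * (ω ⊗ₖ η) * Uᴴ)) - _ ≥ _
  rw [hratio, logb_div (by positivity) (by positivity)]
  linarith

/-- for the completely factorizable channel `Λ(ρ) = Tr_F[U(ρ ⊗ ω_{B₁})U†]`
built from a unitary `U : B₁ ⊗ Q₁ → F ⊗ Q₂`, every density matrix `η` on `Q₁` satisfies
`H(Λ(η)) − H(η) ≥ log₂(dim Q₂ / dim Q₁) = log₂(dim B₁ / dim F)`. -/
theorem factorizableChannel_entropy_gain (b q1 f q2 : ℕ)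
    (hb : 0 < b) (hq1 : 0 < q1) (hf : 0 < f) (hq2 : 0 < q2)
    (U : Matrix (Fin f × Fin q2) (Fin b × Fin q1) ℂ)
    (hU1 : U * Uᴴ = 1) (hU2 : Uᴴ * U = 1)
    (η : Matrix (Fin q1) (Fin q1) ℂ) (hη : η.PosSemidef) (hη1 : η.trace = 1) :
    vnEntropy (factorizableChannel b q1 f q2 U η) - vnEntropy η ≥
        Real.logb 2 ((q2 : ℝ) / (q1 : ℝ)) ∧
      Real.logb 2 ((q2 : ℝ) / (q1 : ℝ)) = Real.logb 2 ((b : ℝ) / (f : ℝ)) :=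
  factorizableChannel_entropy_gain_general b q1 f q2 hb hq1 hf U hU1 hU2 η hη hη1
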